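/- Let E be an elliptic curve over F_q with trace of Frobenius τ, and let d be an integer coprime to q. The Lattès map L_d induces a permutation of P^1(F_q) if and only if (q+1)^2 - τ^2 is coprime to d. -/

import Mathlib

open WeierstrassCurve WeierstrassCurve.Affine

/-- The x-coordinate projection from the points of a Weierstrass curve to the projective line,
modeled as `Option`: the point at infinity maps to `none` (that is, `∞`), and an affine point
`(a, b)` maps to `some a`. -/
def xCoord {R : Type*} [CommRing R] {W : WeierstrassCurve.Affine R} : W.Point → Option R
  | .zero => none
  | .some x _ _ => some x

/-- The embedding of `P^1(F)` into `P^1(K)` induced by a field extension `F → K`;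
`none` is the point at infinity. -/
def p1Emb (F K : Type*) [Field F] [Field K] [Algebra F K] : Option F → Option K :=
  Option.map (algebraMap F K)

/-!
Let `φ` be the `q`-power Frobenius acting on `E(K)`, `K = 𝔽_{q²}`. A point of `E(K)` has its
x-coordinate in `P¹(𝔽_q)` iff `φ P = ± P`, i.e. iff it lies in `G = ker (φ - 1) ≅ E(𝔽_q)` or in
`T = ker (φ + 1)` (the points of the quadratic twist). Every point of `P¹(𝔽_q)` has fibre `{P, -P}`
in `E(K)`, which counted once in `G` and once in `T` always gives 2; hence `#G + #T = 2(q + 1)` and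
`#G · #T = (q + 1)² - τ²`. Since `L_d ∘ x = x ∘ [d]` and only `0` lies over `∞`, `L_d` permutes
`P¹(𝔽_q)` iff `[d]` is injective on `G` and on `T`, i.e. iff `d` is coprime to `#G · #T`.
-/

open Function Finset Polynomial FiniteField

theorem zsmul_injective_iff_isCoprime_natCard {H : Type*} [AddCommGroup H] [Finite H] (d : ℤ) :
    Injective (fun P : H => d • P) ↔ IsCoprime (Nat.card H : ℤ) d := by
  refine ⟨fun hinj => ?_, fun ⟨u, v, huv⟩ => ?_⟩
  · by_contra hnc
    have : ¬(Nat.card H).Coprime d.natAbs := by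
      rwa [Int.isCoprime_iff_gcd_eq_one, Int.gcd, Int.natAbs_natCast] at hnc
    obtain ⟨p, hp, hpH, hpd⟩ := Nat.Prime.not_coprime_iff_dvd.mp this
    have := Fact.mk hp
    obtain ⟨P, hP⟩ := exists_prime_addOrderOf_dvd_card' p hpH
    have hP0 : P ≠ 0 := by
      rintro rfl
      exact hp.ne_one (hP ▸ addOrderOf_zero)
    refine hP0 (hinj ?_)
    simp only [smul_zero]
    rwa [← addOrderOf_dvd_iff_zsmul_eq_zero, hP, Int.natCast_dvd]
  · refine (injective_iff_map_eq_zero (zsmulAddGroupHom (α := H) d)).2 fun P hP => ?_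
    calc P = (u * Nat.card H + v * d) • P := by rw [huv, one_smul]
      _ = u • (Nat.card H • P) + v • (d • P) := by
        rw [add_smul, mul_smul, mul_smul, natCast_zsmul]
      _ = 0 := by
        rw [card_nsmul_eq_zero', show d • P = 0 from hP, smul_zero, smul_zero, add_zero]

theorem AddSubgroup.zsmul_injective_iff {A : Type*} [AddCommGroup A] {H : AddSubgroup A} {d : ℤ} :
    Injective (fun P : H => d • P) ↔ ∀ P ∈ H, d • P = 0 → P = 0 := by
  refine (injective_iff_map_eq_zero (zsmulAddGroupHom (α := H) d)).trans
    ⟨fun h P hP hdP => ?_, fun h P hdP => Subtype.ext (h P P.2 (congrArg Subtype.val hdP))⟩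
  exact congrArg Subtype.val (h ⟨P, hP⟩ (Subtype.ext hdP))

section PlusMinusFibres

variable {A β : Type*} [AddCommGroup A]

theorem card_filter_pair_add_card_filter_pair [DecidableEq A] (φ : A →+ A) {P : A}
    (hP : φ P = P ∨ φ P = -P) :
    (({P, -P} : Finset A).filter (fun Q => φ Q = Q)).card +
      (({P, -P} : Finset A).filter (fun Q => φ Q = -Q)).card = 2 := by
  by_cases h : P = -P
  · have hφ : φ P = P := by rcases hP with hP | hP <;> grind
    simp [← h, filter_singleton, hφ]
  · have h' : -P ≠ P := fun e => h e.symm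
    rcases hP with hP | hP <;> simp [filter_insert, filter_singleton, hP, h, h', card_pair h]

theorem card_eqLocus_add_card_eqLocus_neg [Finite A] (φ : A →+ A) {x : A → β} {X : Set β}
    (hx : ∀ P, x P ∈ X ↔ φ P = P ∨ φ P = -P) (hX : X ⊆ Set.range x)
    (hfib : ∀ P Q, x P = x Q ↔ P = Q ∨ P = -Q) :
    Nat.card (φ.eqLocus (.id A)) + Nat.card (φ.eqLocus (-.id A)) = 2 * Nat.card X := by
  classical
  have := Fintype.ofFinite A
  have hfin : X.Finite := (Set.finite_range x).subset hX
  have hmaps (p : A → Prop) [DecidablePred p] (hp : ∀ P, p P → x P ∈ X) :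
      Set.MapsTo x ↑(univ.filter p) ↑hfin.toFinset := fun P hP => by
    simpa using hp P (by simpa using hP)
  have hfiber (p : A → Prop) [DecidablePred p] (P : A) :
      (univ.filter p).filter (x · = x P) = ({P, -P} : Finset A).filter p := by
    ext Q; simp [hfib, and_comm]
  have key : ∀ ξ ∈ hfin.toFinset, ((univ.filter fun P => φ P = P).filter (x · = ξ)).card +
      ((univ.filter fun P => φ P = -P).filter (x · = ξ)).card = 2 := by
    intro ξ hξ
    obtain ⟨P, rfl⟩ := hX (hfin.mem_toFinset.1 hξ)
    rw [hfiber, hfiber]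
    exact card_filter_pair_add_card_filter_pair φ ((hx P).1 (hfin.mem_toFinset.1 hξ))
  have hG (P : A) : P ∈ φ.eqLocus (.id A) ↔ φ P = P := Iff.rfl
  have hT (P : A) : P ∈ φ.eqLocus (-.id A) ↔ φ P = -P := Iff.rfl
  rw [Nat.card_eq_fintype_card, Nat.card_eq_fintype_card, Fintype.card_subtype,
    Fintype.card_subtype]
  simp only [hG, hT]
  rw [card_eq_sum_card_fiberwise (hmaps _ fun P hP => (hx P).2 (Or.inl hP)),
    card_eq_sum_card_fiberwise (hmaps _ fun P hP => (hx P).2 (Or.inr hP)), ← sum_add_distrib,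
    sum_congr rfl key, sum_const, smul_eq_mul, mul_comm, Nat.card_eq_card_finite_toFinset hfin]

end PlusMinusFibres

theorem bijOn_iff_zsmul_injective {A β : Type*} [AddCommGroup A] [Finite A] {x : A → β}
    {X : Set β} {G T : AddSubgroup A} {L : β → β} {d : ℤ}
    (hx : ∀ P, x P ∈ X ↔ P ∈ G ∨ P ∈ T) (hX : X ⊆ Set.range x) (hx0 : ∀ P, x P = x 0 ↔ P = 0)
    (hL : ∀ P, L (x P) = x (d • P)) :
    Set.BijOn L X X ↔ Injective (fun P : G => d • P) ∧ Injective (fun P : T => d • P) := by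
  have hmaps : Set.MapsTo L X X := by
    intro ξ hξ
    obtain ⟨P, rfl⟩ := hX hξ
    rw [hL, hx]
    exact ((hx P).1 hξ).imp (G.zsmul_mem · d) (T.zsmul_mem · d)
  have hfin : X.Finite := (Set.finite_range x).subset hX
  constructor
  · intro hbij
    have hker : ∀ P, x P ∈ X → d • P = 0 → P = 0 := fun P hP hdP =>
      (hx0 P).1 (hbij.injOn hP ((hx 0).2 (Or.inl G.zero_mem)) (by rw [hL, hL, hdP, smul_zero]))
    simp only [AddSubgroup.zsmul_injective_iff]
    exact ⟨fun P hP => hker P ((hx P).2 (Or.inl hP)), fun P hP => hker P ((hx P).2 (Or.inr hP))⟩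
  · rintro ⟨hG, hT⟩
    have hdiv {H : AddSubgroup A} (hH : Injective (fun P : H => d • P)) (P : A) (hP : P ∈ H) :
        ∃ Q ∈ H, d • Q = P := by
      obtain ⟨Q, hQ⟩ := Finite.surjective_of_injective hH ⟨P, hP⟩
      exact ⟨Q, Q.2, congrArg Subtype.val hQ⟩
    refine (hfin.surjOn_iff_bijOn_of_mapsTo hmaps).1 fun ξ hξ => ?_
    obtain ⟨P, rfl⟩ := hX hξ
    obtain ⟨Q, hQ, rfl⟩ : ∃ Q, (Q ∈ G ∨ Q ∈ T) ∧ d • Q = P := by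
      rcases (hx P).1 hξ with hP | hP
      · obtain ⟨Q, hQ, rfl⟩ := hdiv hG P hP
        exact ⟨Q, Or.inl hQ, rfl⟩
      · obtain ⟨Q, hQ, rfl⟩ := hdiv hT P hP
        exact ⟨Q, Or.inr hQ, rfl⟩
    exact ⟨x Q, (hx Q).2 hQ, hL Q⟩

theorem FiniteField.pow_card_eq_self_iff_mem_range {F K : Type*} [Field F] [Fintype F]
    [Field K] [Finite K] [Algebra F K] {a : K} :
    a ^ Fintype.card F = a ↔ a ∈ Set.range (algebraMap F K) := by
  change frobeniusAlgHom F K a = a ↔ _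
  rw [IsGalois.mem_range_algebraMap_iff_fixed]
  refine ⟨fun h σ => ?_, fun h => h (frobeniusAlgEquivOfAlgebraic F K)⟩
  obtain ⟨n, rfl⟩ := (bijective_frobeniusAlgEquivOfAlgebraic_pow F K).2 σ
  rw [AlgEquiv.coe_pow]
  exact iterate_fixed h n

theorem Irreducible.exists_aeval_eq_zero_of_natDegree_dvd_finrank {F K : Type*} [Field F]
    [Field K] [Finite K] [Algebra F K] {h : F[X]} (hh : Irreducible h)
    (hdvd : h.natDegree ∣ Module.finrank F K) : ∃ r : K, aeval r h = 0 := by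
  have := Fact.mk hh
  obtain ⟨σ⟩ := nonempty_algHom_of_finrank_dvd (F := F) (K := AdjoinRoot h) (L := K)
    (finrank_quotient_span_eq_natDegree (f := h) ▸ hdvd)
  exact ⟨σ (AdjoinRoot.root h), by
    rw [aeval_algHom_apply, AdjoinRoot.aeval_eq, AdjoinRoot.mk_self, map_zero]⟩

theorem exists_aeval_eq_zero_of_natDegree_le_two {F K : Type*} [Field F] [Fintype F] [Field K]
    [Fintype K] [Algebra F K] (hK : Fintype.card K = Fintype.card F ^ 2) {g : F[X]}
    (h0 : 0 < g.natDegree) (h2 : g.natDegree ≤ 2) : ∃ r : K, aeval r g = 0 := by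
  have hrank : Module.finrank F K = 2 := by
    rw [Module.card_eq_pow_finrank (K := F)] at hK
    exact Nat.pow_right_injective Fintype.one_lt_card hK
  have hg0 : g ≠ 0 := ne_zero_of_natDegree_gt h0
  obtain ⟨h, hirr, hdvd⟩ :=
    WfDvdMonoid.exists_irreducible_factor (not_isUnit_of_natDegree_pos g h0) hg0
  have hpos := hirr.natDegree_pos
  have hle := (natDegree_le_of_dvd hdvd hg0).trans h2
  obtain ⟨r, hr⟩ := hirr.exists_aeval_eq_zero_of_natDegree_dvd_finrank (K := K) <| by
    rw [hrank]; interval_cases h.natDegree <;> norm_num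
  obtain ⟨t, rfl⟩ := hdvd
  exact ⟨r, by rw [map_mul, hr, zero_mul]⟩

section XCoord

variable {R : Type*} [Field R] {W : WeierstrassCurve.Affine R}

theorem xCoord_eq_xCoord_iff {P Q : W.Point} : xCoord P = xCoord Q ↔ P = Q ∨ P = -Q := by
  rw [← Point.xRep_eq_xRep_iff]
  rcases P with _ | ⟨x, y, h⟩ <;> rcases Q with _ | ⟨x', y', h'⟩ <;> simp [xCoord, Point.xRep]

theorem xCoord_eq_none_iff {P : W.Point} : xCoord P = none ↔ P = 0 := by
  rcases P with _ | ⟨x, y, h⟩ <;> simp [xCoord, Point.zero_def]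

instance [Finite R] : Finite W.Point :=
  Finite.of_injective (fun P : W.Point => match P with | .zero => none | .some x y _ => some (x, y))
    (by rintro (_ | ⟨x, y, h⟩) (_ | ⟨x', y', h'⟩) hPQ <;> simp_all)

theorem xCoord_map {F K L : Type*} [Field F] [Field K] [Field L] [Algebra F K] [Algebra F L]
    [DecidableEq K] [DecidableEq L] {E : WeierstrassCurve F} (f : K →ₐ[F] L)
    (P : Point (E.baseChange K)) : xCoord (Point.map f P) = Option.map f (xCoord P) := by
  cases P <;> rfl

end XCoord

theorem natCard_range_p1Emb {F K : Type*} [Field F] [Fintype F] [Field K] [Algebra F K] :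
    Nat.card (Set.range (p1Emb F K)) = Fintype.card F + 1 := by
  rw [Nat.card_range_of_injective (f := p1Emb F K)
    (Option.map_injective (algebraMap F K).injective), Nat.card_eq_fintype_card,
    Fintype.card_option]

section QuadraticExtension

variable {F K : Type*} [Field F] [Fintype F] [Field K] [Fintype K] [Algebra F K]
  {E : WeierstrassCurve F}

theorem mem_range_p1Emb_iff {ξ : Option K} :
    ξ ∈ Set.range (p1Emb F K) ↔ Option.map (frobeniusAlgHom F K) ξ = ξ := by
  cases ξ with
  | none => exact ⟨fun _ => rfl, fun _ => ⟨none, rfl⟩⟩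
  | some a => simp [p1Emb, pow_card_eq_self_iff_mem_range]

theorem xCoord_mem_range_p1Emb_iff [DecidableEq K] (P : Point (E.baseChange K)) :
    xCoord P ∈ Set.range (p1Emb F K) ↔
      Point.map (frobeniusAlgHom F K) P = P ∨ Point.map (frobeniusAlgHom F K) P = -P := by
  rw [mem_range_p1Emb_iff, ← xCoord_map, xCoord_eq_xCoord_iff]

theorem map_frobeniusAlgHom_eq_self_iff [DecidableEq F] [DecidableEq K]
    (P : Point (E.baseChange K)) :
    Point.map (frobeniusAlgHom F K) P = P ↔ P ∈ Set.range (Point.baseChange F K) := by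
  refine ⟨fun hP => ?_, by rintro ⟨Q, rfl⟩; exact Point.map_baseChange _ Q⟩
  rcases P with _ | ⟨x, y, h⟩
  · exact ⟨0, rfl⟩
  · obtain ⟨hx, hy⟩ := Point.some.inj hP
    obtain ⟨a, rfl⟩ := pow_card_eq_self_iff_mem_range.1 hx
    obtain ⟨b, rfl⟩ := pow_card_eq_self_iff_mem_range.1 hy
    exact ⟨.some a b ((Affine.baseChange_nonsingular E (Algebra.ofId F K).injective a b).1 h), rfl⟩

theorem natCard_eqLocus_map_frobeniusAlgHom [DecidableEq F] [DecidableEq K] :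
    Nat.card ((Point.map (W' := E) (frobeniusAlgHom F K)).eqLocus (.id _)) =
      Nat.card (Point (E.baseChange F)) :=
  Nat.card_congr <| (Equiv.subtypeEquivRight map_frobeniusAlgHom_eq_self_iff).trans
    (Equiv.ofInjective _ (Point.map_injective _)).symm

theorem exists_xCoord_eq_some [E.IsElliptic] (hK : Fintype.card K = Fintype.card F ^ 2) (a : F) :
    ∃ P : Point (E.baseChange K), xCoord P = some (algebraMap F K a) := by
  have : (E.baseChange K).IsElliptic := inferInstanceAs (E.map (algebraMap F K)).IsElliptic
  -- the Weierstrass equation at `x = a`, as a polynomial in `y`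
  set g : F[X] := X ^ 2 + C (E.a₁ * a + E.a₃) * X - C (a ^ 3 + E.a₂ * a ^ 2 + E.a₄ * a + E.a₆)
    with hg
  have hdeg : g.natDegree = 2 := by rw [hg]; compute_degree!
  obtain ⟨r, hr⟩ := exists_aeval_eq_zero_of_natDegree_le_two (K := K) hK (hdeg ▸ two_pos) hdeg.le
  have heq : (E.baseChange K).toAffine.Equation (algebraMap F K a) r := by
    rw [equation_iff]
    simp only [hg, map_sub, map_add, map_mul, map_pow, aeval_X, aeval_C] at hr
    simp only [WeierstrassCurve.toAffine, WeierstrassCurve.baseChange, WeierstrassCurve.map_a₁,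
      WeierstrassCurve.map_a₂, WeierstrassCurve.map_a₃, WeierstrassCurve.map_a₄,
      WeierstrassCurve.map_a₆]
    linear_combination hr
  exact ⟨.some _ _ (equation_iff_nonsingular.1 heq), rfl⟩

theorem range_p1Emb_subset_range_xCoord [E.IsElliptic]
    (hK : Fintype.card K = Fintype.card F ^ 2) :
    Set.range (p1Emb F K) ⊆ Set.range (xCoord (W := E.baseChange K)) := by
  rintro - ⟨_ | a, rfl⟩
  · exact ⟨0, rfl⟩
  · exact exists_xCoord_eq_some hK a

end QuadraticExtension

open Classical in
theorem lattes_permutation_iff_general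
    {F : Type*} [Field F] [Fintype F] {K : Type*} [Field K] [Fintype K] [Algebra F K]
    (hK : Fintype.card K = (Fintype.card F) ^ 2)
    (E : WeierstrassCurve F) [E.IsElliptic]
    (τ : ℤ) (hτ : (Nat.card (WeierstrassCurve.Affine.Point (WeierstrassCurve.baseChange E F)) : ℤ) = Fintype.card F + 1 - τ)
    (d : ℤ)
    (Ld : Option K → Option K) (hLd : ∀ P : WeierstrassCurve.Affine.Point (WeierstrassCurve.baseChange E K), Ld (xCoord P) = xCoord (d • P)) :
    Set.BijOn Ld (Set.range (p1Emb F K)) (Set.range (p1Emb F K)) ↔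
      Int.gcd (((Fintype.card F : ℤ) + 1) ^ 2 - τ ^ 2) d = 1 := by
  set φ := Point.map (W' := E) (frobeniusAlgHom F K)
  have hx := xCoord_mem_range_p1Emb_iff (E := E) (K := K)
  have hX := range_p1Emb_subset_range_xCoord (E := E) hK
  have hcard := card_eqLocus_add_card_eqLocus_neg φ hx hX fun _ _ => xCoord_eq_xCoord_iff
  rw [natCard_range_p1Emb, natCard_eqLocus_map_frobeniusAlgHom] at hcard
  have hprod : ((Fintype.card F : ℤ) + 1) ^ 2 - τ ^ 2 =
      Nat.card (φ.eqLocus (.id _)) * Nat.card (φ.eqLocus (-.id _)) := by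
    rw [natCard_eqLocus_map_frobeniusAlgHom]
    zify at hcard
    linear_combination (Nat.card (Point (E.baseChange F)) - Fintype.card F - 1 - τ : ℤ) * hτ -
      Nat.card (Point (E.baseChange F)) * hcard
  rw [bijOn_iff_zsmul_injective (G := φ.eqLocus (.id _)) (T := φ.eqLocus (-.id _)) hx hX
      (fun _ => xCoord_eq_none_iff) hLd,
    zsmul_injective_iff_isCoprime_natCard, zsmul_injective_iff_isCoprime_natCard,
    ← IsCoprime.mul_left_iff, ← hprod, Int.isCoprime_iff_gcd_eq_one]

open Classical in
/-- Let `E` be an elliptic curve over a finite field `F` with `q` elements and trace of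
Frobenius `τ`, and let `d` be an integer coprime to `q`. The Lattès map `L_d` induces a
permutation of `P^1(F)` (viewed inside `P^1(K)` for the quadratic extension `K/F`) if and only
if `(q+1)^2 - τ^2` is coprime to `d`. -/
theorem lattes_permutation_iff
    {F : Type*} [Field F] [Fintype F] {K : Type*} [Field K] [Fintype K] [Algebra F K]
    (hK : Fintype.card K = (Fintype.card F) ^ 2)
    (E : WeierstrassCurve F) [E.IsElliptic]
    (τ : ℤ) (hτ : (Nat.card (WeierstrassCurve.Affine.Point (WeierstrassCurve.baseChange E F)) : ℤ) = Fintype.card F + 1 - τ)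
    (d : ℤ) (hd : Int.gcd d (Fintype.card F) = 1)
    (Ld : Option K → Option K) (hLd : ∀ P : WeierstrassCurve.Affine.Point (WeierstrassCurve.baseChange E K), Ld (xCoord P) = xCoord (d • P)) :
    Set.BijOn Ld (Set.range (p1Emb F K)) (Set.range (p1Emb F K)) ↔
      Int.gcd (((Fintype.card F : ℤ) + 1) ^ 2 - τ ^ 2) d = 1 :=
  lattes_permutation_iff_general hK E τ hτ d Ld hLd
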